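/- For every ε > 0 there exists X > 0 such that for all real x ≥ X, √5 · h(x) ≤ φ^{log₂ 3} · x^{log₂ φ} + ε. -/

import Mathlib

/-!
With `α = log₂ φ` one has `(2ⁿ)^α = φⁿ` and `φ^(log₂ 3) = 3^α`, so
`φ^(log₂ 3) · m_n^α = (3 m_n)^α ≥ (2ⁿ - 1)^α ≥ φⁿ - (φ/2)ⁿ`. By Binet's formula
`√5 Fₙ = φⁿ - ψⁿ` therefore lies below `φ^(log₂ 3) · m_n^α` up to an error `(φ/2)ⁿ + |ψ|ⁿ`
that tends to `0`. Since `x ↦ φ^(log₂ 3) x^α + ε` is concave, once it dominates `√5 h` at the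
nodes `m_n`, `m_{n+1}` it dominates the linear interpolant `√5 h` on `[m_n, m_{n+1}]`.
-/

open Real Filter Topology Set
open scoped goldenRatio

theorem Real.rpow_logb_comm {b x y : ℝ} (hx : 0 < x) (hy : 0 < y) :
    x ^ logb b y = y ^ logb b x := by
  rw [rpow_def_of_pos hx, rpow_def_of_pos hy, logb, logb]
  ring_nf

theorem ConcaveOn.add_sub_mul_div_le {s : Set ℝ} {g : ℝ → ℝ} (hg : ConcaveOn ℝ s g)
    {a b x u v : ℝ} (ha : a ∈ s) (hb : b ∈ s) (hx : x ∈ Icc a b)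
    (hu : u ≤ g a) (hv : v ≤ g b) :
    u + (v - u) * (x - a) / (b - a) ≤ g x := by
  obtain ⟨hax, hxb⟩ := hx
  rcases (hax.trans hxb).eq_or_lt with rfl | hab
  · obtain rfl : x = a := le_antisymm hxb hax
    simpa using hu
  · set t := (x - a) / (b - a)
    have ht0 : 0 ≤ t := div_nonneg (by linarith) (by linarith)
    have ht1 : t ≤ 1 := (div_le_one (by linarith)).2 (by linarith)
    have hxt : (1 - t) • a + t • b = x := by
      simp only [t, smul_eq_mul]; field_simp; ring
    have hconc := hg.2 ha hb (by linarith : 0 ≤ 1 - t) ht0 (by ring)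
    rw [hxt, smul_eq_mul, smul_eq_mul] at hconc
    calc u + (v - u) * (x - a) / (b - a) = (1 - t) * u + t * v := by
          simp only [t]; ring
      _ ≤ (1 - t) * g a + t * g b := by gcongr
      _ ≤ g x := hconc

theorem exists_le_lt_succ_of_tendsto_atTop {α : Type*} [LinearOrder α] [NoMaxOrder α]
    {u : ℕ → α} (hu : Tendsto u atTop atTop) {N : ℕ} {x : α} (hx : u N ≤ x) :
    ∃ n, N ≤ n ∧ u n ≤ x ∧ x < u (n + 1) := by
  classical
  have hP : ∃ k, N ≤ k ∧ x < u (k + 1) :=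
    (((tendsto_add_atTop_iff_nat 1).2 hu).eventually_gt_atTop x |>.and
      (eventually_ge_atTop N)).exists.imp fun _ hk => hk.symm
  refine ⟨Nat.find hP, (Nat.find_spec hP).1, ?_, (Nat.find_spec hP).2⟩
  obtain hN | hlt := (Nat.find_spec hP).1.eq_or_lt
  · rwa [← hN]
  · obtain ⟨m, hm⟩ : ∃ m, Nat.find hP = m + 1 := Nat.exists_eq_succ_of_ne_zero (by omega)
    have hmin := Nat.find_min hP (show m < Nat.find hP by omega)
    rw [hm]
    exact not_lt.1 fun h => hmin ⟨by omega, h⟩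

noncomputable def jacobsthal (n : ℕ) : ℝ := (2 ^ n - (-1) ^ n) / 3

theorem two_pow_sub_one_le_three_mul_jacobsthal (n : ℕ) :
    (2 : ℝ) ^ n - 1 ≤ 3 * jacobsthal n := by
  rw [jacobsthal]
  rcases neg_one_pow_eq_or ℝ n with h | h <;> rw [h] <;> linarith

theorem jacobsthal_pos {n : ℕ} (hn : n ≠ 0) : 0 < jacobsthal n := by
  have : (2 : ℝ) ≤ 2 ^ n := le_self_pow₀ one_le_two hn
  linarith [two_pow_sub_one_le_three_mul_jacobsthal n]

theorem jacobsthal_nonneg (n : ℕ) : 0 ≤ jacobsthal n := by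
  have : (1 : ℝ) ≤ 2 ^ n := one_le_pow₀ one_le_two
  linarith [two_pow_sub_one_le_three_mul_jacobsthal n]

theorem tendsto_jacobsthal_atTop : Tendsto jacobsthal atTop atTop := by
  refine tendsto_atTop_mono (fun n => ?_) (((tendsto_pow_atTop_atTop_of_one_lt one_lt_two).atTop_add
    (tendsto_const_nhds (x := (-1 : ℝ)))).atTop_div_const (by norm_num : (0 : ℝ) < 3))
  linarith [two_pow_sub_one_le_three_mul_jacobsthal n]

theorem logb_two_goldenRatio_nonneg : 0 ≤ logb 2 φ :=
  logb_nonneg one_lt_two one_lt_goldenRatio.le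

theorem logb_two_goldenRatio_le_one : logb 2 φ ≤ 1 := by
  simpa using logb_le_logb_of_le one_lt_two goldenRatio_pos goldenRatio_lt_two.le

theorem goldenRatio_pow_sub_le_rpow (n : ℕ) :
    φ ^ n - (φ / 2) ^ n ≤ ((2 : ℝ) ^ n - 1) ^ logb 2 φ := by
  have hpow : ((2 : ℝ) ^ n) ^ logb 2 φ = φ ^ n := by
    rw [← rpow_natCast, ← rpow_mul zero_le_two, mul_comm, rpow_mul zero_le_two,
      rpow_logb two_pos (by norm_num) goldenRatio_pos, rpow_natCast]
  have hhalf₀ : 0 ≤ ((1 : ℝ) / 2) ^ n := by positivity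
  have hhalf₁ : ((1 : ℝ) / 2) ^ n ≤ 1 := pow_le_one₀ (by norm_num) (by norm_num)
  calc φ ^ n - (φ / 2) ^ n = φ ^ n * (1 - (1 / 2) ^ n) := by
        rw [div_eq_mul_one_div φ, mul_pow]; ring
    _ ≤ φ ^ n * (1 - (1 / 2) ^ n) ^ logb 2 φ := by
        gcongr
        exact self_le_rpow_of_le_one (by linarith) (by linarith) logb_two_goldenRatio_le_one
    _ = (2 ^ n * (1 - (1 / 2) ^ n)) ^ logb 2 φ := by
        rw [mul_rpow (by positivity) (by linarith), hpow]
    _ = ((2 : ℝ) ^ n - 1) ^ logb 2 φ := by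
        rw [mul_sub, mul_one, ← mul_pow]; norm_num

theorem sqrt5_mul_fib_le (n : ℕ) :
    √5 * Nat.fib n ≤ φ ^ logb 2 3 * jacobsthal n ^ logb 2 φ + ((φ / 2) ^ n + |ψ| ^ n) := by
  have hbinet : √5 * Nat.fib n = φ ^ n - ψ ^ n := by
    rw [coe_fib_eq]; field_simp
  have hconj : -ψ ^ n ≤ |ψ| ^ n := by
    rw [← abs_pow]; exact neg_le_abs _
  have hjac : ((2 : ℝ) ^ n - 1) ^ logb 2 φ ≤ φ ^ logb 2 3 * jacobsthal n ^ logb 2 φ := by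
    rw [rpow_logb_comm goldenRatio_pos (by norm_num),
      ← mul_rpow (by norm_num) (jacobsthal_nonneg n)]
    exact rpow_le_rpow (by linarith [one_le_pow₀ (M₀ := ℝ) (n := n) one_le_two])
      (two_pow_sub_one_le_three_mul_jacobsthal n) logb_two_goldenRatio_nonneg
  linarith [goldenRatio_pow_sub_le_rpow n]

theorem tendsto_goldenRatio_div_two_pow_add_abs_goldenConj_pow :
    Tendsto (fun n : ℕ => (φ / 2) ^ n + |ψ| ^ n) atTop (𝓝 0) := by
  simpa using (tendsto_pow_atTop_nhds_zero_of_lt_one (by positivity)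
    (by linarith [goldenRatio_lt_two])).add (tendsto_pow_atTop_nhds_zero_of_lt_one (abs_nonneg ψ)
    (abs_lt.2 ⟨neg_one_lt_goldenConj, goldenConj_neg.trans one_pos⟩))

theorem sqrt5_h_le_general
    (M : ℕ → ℝ) (hM : ∀ n : ℕ, M n = (2 ^ n - (-1) ^ n) / 3)
    (h : ℝ → ℝ)
    (hlin : ∀ n : ℕ, 2 ≤ n → ∀ x ∈ Set.Icc (M n) (M (n + 1)),
      h x = (Nat.fib n : ℝ) +
        ((Nat.fib (n + 1) : ℝ) - (Nat.fib n : ℝ)) * (x - M n) / (M (n + 1) - M n)) :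
    ∀ ε : ℝ, 0 < ε → ∃ X : ℝ, 0 < X ∧ ∀ x : ℝ, X ≤ x →
      Real.sqrt 5 * h x ≤
        ((1 + Real.sqrt 5) / 2) ^ (Real.logb 2 3)
          * x ^ (Real.logb 2 ((1 + Real.sqrt 5) / 2)) + ε := by
  intro ε hε
  obtain rfl : M = jacobsthal := funext hM
  set g : ℝ → ℝ := fun x => φ ^ logb 2 3 * x ^ logb 2 φ + ε with hg_def
  change ∃ X : ℝ, 0 < X ∧ ∀ x : ℝ, X ≤ x → √5 * h x ≤ g x
  have hg : ConcaveOn ℝ (Ici 0) g :=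
    ((concaveOn_rpow logb_two_goldenRatio_nonneg logb_two_goldenRatio_le_one).smul
      (by positivity)).add (concaveOn_const ε (convex_Ici 0))
  obtain ⟨N, hN⟩ : ∃ N, ∀ n ≥ N, √5 * Nat.fib n ≤ g (jacobsthal n) :=
    eventually_atTop.1 <|
      (tendsto_goldenRatio_div_two_pow_add_abs_goldenConj_pow.eventually (ge_mem_nhds hε)).mono
        fun n hn => (sqrt5_mul_fib_le n).trans (by simp only [hg_def]; linarith)
  refine ⟨jacobsthal (max N 2), jacobsthal_pos (by omega), fun x hx => ?_⟩
  obtain ⟨n, hNn, hnx, hxn⟩ := exists_le_lt_succ_of_tendsto_atTop tendsto_jacobsthal_atTop hx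
  rw [hlin n (le_of_max_le_right hNn) x ⟨hnx, hxn.le⟩]
  calc _ = √5 * Nat.fib n + (√5 * Nat.fib (n + 1) - √5 * Nat.fib n) * (x - jacobsthal n)
        / (jacobsthal (n + 1) - jacobsthal n) := by ring
    _ ≤ g x := hg.add_sub_mul_div_le (jacobsthal_nonneg n) (jacobsthal_nonneg (n + 1))
        ⟨hnx, hxn.le⟩ (hN n (le_of_max_le_left hNn)) (hN (n + 1) (by omega))

/-- For every `ε > 0` there exists `X > 0` such that for all real `x ≥ X`,
`√5 · h(x) ≤ φ^(log₂ 3) · x^(log₂ φ) + ε`, where `φ = (1+√5)/2`. -/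
theorem sqrt5_h_le
    (M : ℕ → ℝ) (hM : ∀ n : ℕ, M n = (2 ^ n - (-1) ^ n) / 3)
    (h : ℝ → ℝ)
    (h01 : ∀ x ∈ Set.Icc (0 : ℝ) 1, h x = x)
    (hlin : ∀ n : ℕ, 2 ≤ n → ∀ x ∈ Set.Icc (M n) (M (n + 1)),
      h x = (Nat.fib n : ℝ) +
        ((Nat.fib (n + 1) : ℝ) - (Nat.fib n : ℝ)) * (x - M n) / (M (n + 1) - M n)) :
    ∀ ε : ℝ, 0 < ε → ∃ X : ℝ, 0 < X ∧ ∀ x : ℝ, X ≤ x →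
      Real.sqrt 5 * h x ≤
        ((1 + Real.sqrt 5) / 2) ^ (Real.logb 2 3)
          * x ^ (Real.logb 2 ((1 + Real.sqrt 5) / 2)) + ε :=
  sqrt5_h_le_general M hM h hlin
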